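/- Fix κ > 1 and define r(x,κ) = √(2π) · g(x,κ) · e^{x²/2}, where g(x,κ) = (e^{1/(π(κ-1)+2)}/(2κ)) · √((κ-1)(π(κ-1)+2)/π) · e^{-κx²/2}. Then there exist unique points x₁ and x₂ with 0 < x₁ < 1/√(κ-1) < x₂ such that for x ≥ 0, κ·x·r(x,κ) ≥ 1 holds if and only if x ∈ [x₁, x₂], and equality holds if and only if x = x₁ or x = x₂. -/

import Mathlib

open Real

noncomputable def gfun (x κ : ℝ) : ℝ :=
  (Real.exp (1 / (Real.pi * (κ - 1) + 2)) / (2 * κ)) *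
    Real.sqrt ((κ - 1) * (Real.pi * (κ - 1) + 2) / Real.pi) *
    Real.exp (-(κ * x ^ 2) / 2)

noncomputable def rfun (x κ : ℝ) : ℝ :=
  Real.sqrt (2 * Real.pi) * gfun x κ * Real.exp (x ^ 2 / 2)

/-!
With `b = κ - 1`, the function `κ x r(x, κ)` is `C x e^{-b x²/2}` for a constant `C > 0`:
it vanishes at `0`, increases up to its peak at `1/√b`, then decreases to `0`. Hence its
superlevel set `{x ≥ 0 | 1 ≤ κ x r(x, κ)}` is an interval `[x₁, x₂]` around the peak as soon as
the peak value exceeds `1`. Writing `u = (π b + 2)/2 > 1`, the peak value is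
`√u e^{1/(2u) - 1/2}`, and it exceeds `1` because `log u > 1 - 1/u`.
-/

open Set Filter Topology

section Unimodal

variable {f : ℝ → ℝ} {a m c x₁ x₂ x : ℝ}

lemma le_iff_mem_Icc_of_unimodal (hmono : StrictMonoOn f (Icc a m))
    (hanti : StrictAntiOn f (Ici m)) (hx₁ : x₁ ∈ Icc a m) (hx₂ : m ≤ x₂) (hfx₁ : f x₁ = c)
    (hfx₂ : f x₂ = c) (hx : a ≤ x) : c ≤ f x ↔ x ∈ Icc x₁ x₂ := by
  rcases le_total x m with hxm | hmx
  · rw [← hfx₁, hmono.le_iff_le hx₁ ⟨hx, hxm⟩]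
    exact ⟨fun h => ⟨h, hxm.trans hx₂⟩, And.left⟩
  · rw [← hfx₂, hanti.le_iff_ge hx₂ hmx]
    exact ⟨fun h => ⟨hx₁.2.trans hmx, h⟩, And.right⟩

lemma eq_iff_of_unimodal (hmono : StrictMonoOn f (Icc a m)) (hanti : StrictAntiOn f (Ici m))
    (hx₁ : x₁ ∈ Ico a m) (hx₂ : m < x₂) (hfx₁ : f x₁ = c) (hfx₂ : f x₂ = c) (hx : a ≤ x) :
    f x = c ↔ x = x₁ ∨ x = x₂ := by
  rcases le_total x m with hxm | hmx
  · rw [← hfx₁, hmono.eq_iff_eq ⟨hx, hxm⟩ (Ico_subset_Icc_self hx₁),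
      or_iff_left (hxm.trans_lt hx₂).ne]
  · rw [← hfx₂, hanti.eq_iff_eq hmx hx₂.le, eq_comm,
      or_iff_right (hx₁.2.trans_le hmx).ne']

theorem existsUnique_superlevel_eq_Icc_of_unimodal (hf : Continuous f) (ham : a < m)
    (hmono : StrictMonoOn f (Icc a m)) (hanti : StrictAntiOn f (Ici m)) (ha : f a < c)
    (hm : c < f m) (hlim : ∀ᶠ x in atTop, f x < c) :
    ∃! p : ℝ × ℝ, a < p.1 ∧ p.1 < m ∧ m < p.2 ∧
      ∀ x, a ≤ x → ((c ≤ f x ↔ x ∈ Icc p.1 p.2) ∧ (f x = c ↔ x = p.1 ∨ x = p.2)) := by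
  obtain ⟨x₁, ⟨hax₁, hx₁m⟩, hfx₁⟩ := intermediate_value_Ioo ham.le hf.continuousOn ⟨ha, hm⟩
  obtain ⟨X, hfX, hmX⟩ := (hlim.and (eventually_gt_atTop m)).exists
  obtain ⟨x₂, ⟨hmx₂, -⟩, hfx₂⟩ := intermediate_value_Ioo' hmX.le hf.continuousOn ⟨hfX, hm⟩
  have hx₁ : x₁ ∈ Ico a m := ⟨hax₁.le, hx₁m⟩
  have heq {x} (hx : a ≤ x) := eq_iff_of_unimodal hmono hanti hx₁ hmx₂ hfx₁ hfx₂ hx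
  refine ⟨(x₁, x₂), ⟨hax₁, hx₁m, hmx₂, fun x hx => ⟨?_, heq hx⟩⟩, ?_⟩
  · exact le_iff_mem_Icc_of_unimodal hmono hanti (Ico_subset_Icc_self hx₁) hmx₂.le hfx₁ hfx₂ hx
  rintro ⟨y₁, y₂⟩ ⟨hay₁, hy₁m, hmy₂, hy⟩
  have hfy₁ : f y₁ = c := ((hy y₁ hay₁.le).2).2 (Or.inl rfl)
  have hfy₂ : f y₂ = c := ((hy y₂ (ham.trans hmy₂).le).2).2 (Or.inr rfl)
  obtain rfl : y₁ = x₁ := ((heq hay₁.le).1 hfy₁).resolve_right (hy₁m.trans hmx₂).ne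
  obtain rfl : y₂ = x₂ := ((heq (ham.trans hmy₂).le).1 hfy₂).resolve_left (hx₁m.trans hmy₂).ne'
  rfl

end Unimodal

section GaussianMoment

lemma hasDerivAt_mul_exp_neg_mul_sq (b x : ℝ) :
    HasDerivAt (fun x => x * exp (-(b * x ^ 2) / 2))
      ((1 - b * x ^ 2) * exp (-(b * x ^ 2) / 2)) x := by
  have hinner : HasDerivAt (fun x => -(b * x ^ 2) / 2) (-(b * x)) x :=
    (((hasDerivAt_pow 2 x).const_mul b).neg.div_const 2).congr_deriv (by push_cast; ring)
  exact ((hasDerivAt_id' x).mul hinner.exp).congr_deriv (by ring)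

variable {b : ℝ}

lemma mul_sq_eq_mul_sqrt_sq (hb : 0 ≤ b) (x : ℝ) : b * x ^ 2 = (x * √b) ^ 2 := by
  rw [mul_pow, sq_sqrt hb, mul_comm]

lemma strictMonoOn_mul_exp_neg_mul_sq (hb : 0 < b) :
    StrictMonoOn (fun x => x * exp (-(b * x ^ 2) / 2)) (Icc 0 (1 / √b)) := by
  refine strictMonoOn_of_deriv_pos (convex_Icc _ _) (by fun_prop) fun x hx => ?_
  rw [interior_Icc] at hx
  have hx' : x * √b < 1 := (lt_div_iff₀ (sqrt_pos.2 hb)).1 hx.2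
  have : b * x ^ 2 < 1 := by
    rw [mul_sq_eq_mul_sqrt_sq hb.le]
    exact pow_lt_one₀ (mul_nonneg hx.1.le (sqrt_nonneg b)) hx' two_ne_zero
  rw [(hasDerivAt_mul_exp_neg_mul_sq b x).deriv]
  exact mul_pos (sub_pos.2 this) (exp_pos _)

lemma strictAntiOn_mul_exp_neg_mul_sq (hb : 0 < b) :
    StrictAntiOn (fun x => x * exp (-(b * x ^ 2) / 2)) (Ici (1 / √b)) := by
  refine strictAntiOn_of_deriv_neg (convex_Ici _) (by fun_prop) fun x hx => ?_
  rw [interior_Ici] at hx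
  have hx' : 1 < x * √b := (div_lt_iff₀ (sqrt_pos.2 hb)).1 hx
  have : 1 < b * x ^ 2 := by
    rw [mul_sq_eq_mul_sqrt_sq hb.le]
    exact one_lt_pow₀ hx' two_ne_zero
  rw [(hasDerivAt_mul_exp_neg_mul_sq b x).deriv]
  exact mul_neg_of_neg_of_pos (sub_neg.2 this) (exp_pos _)

lemma tendsto_mul_exp_neg_mul_sq_atTop (hb : 0 < b) :
    Tendsto (fun x => x * exp (-(b * x ^ 2) / 2)) atTop (𝓝 0) := by
  refine ((tendsto_rpow_abs_mul_exp_neg_mul_sq_cocompact (half_pos hb) 1).mono_left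
    atTop_le_cocompact).congr' ?_
  filter_upwards [eventually_ge_atTop 0] with x hx
  rw [rpow_one, abs_of_nonneg hx]
  ring_nf

end GaussianMoment

lemma one_lt_sqrt_mul_exp {u : ℝ} (hu : 1 < u) : 1 < √u * exp (1 / (2 * u) - 1 / 2) := by
  have hu₀ : 0 < u := one_pos.trans hu
  have hlog : 1 - u⁻¹ < log u := by
    have := log_lt_sub_one_of_pos (inv_pos.2 hu₀) (inv_ne_one.2 hu.ne')
    rw [log_inv] at this
    linarith
  rw [← exp_log (sqrt_pos.2 hu₀), ← exp_add, one_lt_exp_iff, log_sqrt hu₀.le,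
    one_div (2 * u), mul_inv]
  linarith

lemma rfun_eq (x κ : ℝ) : rfun x κ = rfun 0 κ * exp (-((κ - 1) * x ^ 2) / 2) := by
  have hexp : exp (-(κ * x ^ 2) / 2) * exp (x ^ 2 / 2) = exp (-((κ - 1) * x ^ 2) / 2) := by
    rw [← exp_add]
    ring_nf
  simp only [rfun, gfun]
  rw [← hexp]
  simp only [ne_eq, OfNat.ofNat_ne_zero, not_false_eq_true, zero_pow, mul_zero, neg_zero,
    zero_div, exp_zero, mul_one]
  ring

lemma rfun_pos {κ : ℝ} (hκ : 1 < κ) (x : ℝ) : 0 < rfun x κ := by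
  have hb : 0 < κ - 1 := sub_pos.2 hκ
  have : 0 < √((κ - 1) * (π * (κ - 1) + 2) / π) := sqrt_pos.2 (by positivity)
  unfold rfun gfun
  positivity

lemma mul_rfun_zero_div_sqrt {κ : ℝ} (hκ : 1 < κ) :
    κ * rfun 0 κ / √(κ - 1) = √((π * (κ - 1) + 2) / 2) * exp (1 / (π * (κ - 1) + 2)) := by
  have hb : 0 < κ - 1 := sub_pos.2 hκ
  have hsqrt : √(2 * π) * √((κ - 1) * (π * (κ - 1) + 2) / π) =
      2 * √(κ - 1) * √((π * (κ - 1) + 2) / 2) := by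
    rw [← sqrt_mul (by positivity), sqrt_eq_iff_eq_sq (by positivity) (by positivity),
      mul_pow, mul_pow, sq_sqrt hb.le, sq_sqrt (by positivity)]
    field_simp
  calc κ * rfun 0 κ / √(κ - 1)
      = exp (1 / (π * (κ - 1) + 2)) * (√(2 * π) * √((κ - 1) * (π * (κ - 1) + 2) / π)) /
          (2 * √(κ - 1)) := by
        simp only [rfun, gfun]
        field_simp
        simp
    _ = √((π * (κ - 1) + 2) / 2) * exp (1 / (π * (κ - 1) + 2)) := by
        rw [hsqrt]
        field_simp

lemma one_lt_mul_mul_rfun_inv_sqrt {κ : ℝ} (hκ : 1 < κ) :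
    1 < κ * (1 / √(κ - 1)) * rfun (1 / √(κ - 1)) κ := by
  have hb : 0 < κ - 1 := sub_pos.2 hκ
  have hu : 1 < (π * (κ - 1) + 2) / 2 := by nlinarith [pi_pos]
  have hpeak : (κ - 1) * (1 / √(κ - 1)) ^ 2 = 1 := by
    rw [div_pow, one_pow, sq_sqrt hb.le]
    field_simp
  calc 1 < √((π * (κ - 1) + 2) / 2) * exp (1 / (2 * ((π * (κ - 1) + 2) / 2)) - 1 / 2) :=
        one_lt_sqrt_mul_exp hu
    _ = κ * rfun 0 κ / √(κ - 1) * exp (-1 / 2) := by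
        rw [mul_rfun_zero_div_sqrt hκ, mul_assoc, ← exp_add]
        congr 2
        ring
    _ = κ * (1 / √(κ - 1)) * rfun (1 / √(κ - 1)) κ := by
        rw [rfun_eq (1 / √(κ - 1)) κ, hpeak]
        ring

theorem stmt3 (κ : ℝ) (hκ : 1 < κ) :
    ∃! p : ℝ × ℝ, 0 < p.1 ∧ p.1 < 1 / Real.sqrt (κ - 1) ∧
      1 / Real.sqrt (κ - 1) < p.2 ∧
      (∀ x : ℝ, 0 ≤ x →
        ((1 ≤ κ * x * rfun x κ ↔ x ∈ Set.Icc p.1 p.2) ∧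
         (κ * x * rfun x κ = 1 ↔ x = p.1 ∨ x = p.2))) := by
  have hb : 0 < κ - 1 := sub_pos.2 hκ
  have hC : 0 < κ * rfun 0 κ := mul_pos (one_pos.trans hκ) (rfun_pos hκ 0)
  have hf (x : ℝ) : κ * x * rfun x κ = κ * rfun 0 κ * (x * exp (-((κ - 1) * x ^ 2) / 2)) := by
    rw [rfun_eq x κ]
    ring
  have hpeak := one_lt_mul_mul_rfun_inv_sqrt hκ
  have hlim := (tendsto_mul_exp_neg_mul_sq_atTop hb).const_mul (κ * rfun 0 κ)
  rw [mul_zero] at hlim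
  simp only [hf] at hpeak ⊢
  exact existsUnique_superlevel_eq_Icc_of_unimodal (by fun_prop) (by positivity)
    ((strictMono_mul_left_of_pos hC).comp_strictMonoOn (strictMonoOn_mul_exp_neg_mul_sq hb))
    ((strictMono_mul_left_of_pos hC).comp_strictAntiOn (strictAntiOn_mul_exp_neg_mul_sq hb))
    (by simp) hpeak (hlim.eventually (gt_mem_nhds one_pos))
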